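/- For each fixed k ≥ 1, the generating function F_k(x) = ∑_{n≥1} f(n,k) xⁿ, where f(n,k) is the number of pop-stacked permutations of [n] with exactly k ascending runs, is a rational function. -/

import Mathlib

/-- The maximal descending runs of a list, in order. -/
def descRuns : List ℕ → List (List ℕ)
  | [] => []
  | a :: l =>
    match descRuns l with
    | (b :: r) :: rs => if b < a then (a :: b :: r) :: rs else [a] :: (b :: r) :: rs
    | _ => [[a]]

/-- The maximal ascending runs of a list, in order. -/
def ascRuns : List ℕ → List (List ℕ)
  | [] => []
  | a :: l =>
    match ascRuns l with
    | (b :: r) :: rs => if a < b then (a :: b :: r) :: rs else [a] :: (b :: r) :: rs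
    | _ => [[a]]

/-- The pop-stack operator: reverse each maximal descending run. -/
def popStack (l : List ℕ) : List ℕ := ((descRuns l).map List.reverse).flatten

/-- `l` is (the one-line notation of) a permutation of `[n] = {1,…,n}`. -/
def IsPermOf (n : ℕ) (l : List ℕ) : Prop := l.Perm (List.range' 1 n)

/-- Minimum of a list of naturals. -/
noncomputable def lmin (l : List ℕ) : ℕ := sInf {x | x ∈ l}

/-- Maximum of a list of naturals. -/
def lmax (l : List ℕ) : ℕ := l.foldr max 0

/-- Minimum of a finset of naturals. -/
noncomputable def bmin (B : Finset ℕ) : ℕ := sInf (B : Set ℕ)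

/-- Maximum of a finset of naturals. -/
def bmax (B : Finset ℕ) : ℕ := B.sup id

/-- A ballot (ordered set partition) with underlying set `U`. -/
def IsBallot (U : Finset ℕ) (l : List (Finset ℕ)) : Prop :=
  (∀ B ∈ l, B.Nonempty) ∧ l.Pairwise Disjoint ∧ l.foldr (· ∪ ·) ∅ = U

/-- A ballot is overlapping if adjacent blocks satisfy
`max Bᵢ > min Bᵢ₊₁` and `min Bᵢ < max Bᵢ₊₁`. -/
def Overlapping (l : List (Finset ℕ)) : Prop :=
  l.Chain' fun B C => bmin C < bmax B ∧ bmin B < bmax C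

/-- `σ` is pop-stacked: it is the image of some permutation of `[n]` under `popStack`. -/
def IsPopStacked (n : ℕ) (σ : List ℕ) : Prop :=
  ∃ π, IsPermOf n π ∧ popStack π = σ

/-- `f_{c,d}(n)`: overlapping ballots of `[n]` whose last block has min `c` and max `d`. -/
noncomputable def fcd (c d n : ℕ) : ℕ :=
  Nat.card {l : List (Finset ℕ) // IsBallot (Finset.Icc 1 n) l ∧ Overlapping l ∧
    ∃ B, l.getLast? = some B ∧ bmin B = c ∧ bmax B = d}

/-- `f_{c,d}(n,k)`: overlapping ballots of `[n]` with `k` blocks whose last block has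
min `c` and max `d`. -/
noncomputable def fcdk (c d n k : ℕ) : ℕ :=
  Nat.card {l : List (Finset ℕ) // IsBallot (Finset.Icc 1 n) l ∧ Overlapping l ∧
    l.length = k ∧ ∃ B, l.getLast? = some B ∧ bmin B = c ∧ bmax B = d}

/-- The number of pop-stacked permutations of `[n]`. -/
noncomputable def popCount (n : ℕ) : ℕ :=
  Nat.card {σ : List ℕ // IsPermOf n σ ∧ IsPopStacked n σ}

/-- The number of pop-stacked permutations of `[n]` with exactly `k` ascending runs. -/
noncomputable def popCountK (n k : ℕ) : ℕ :=
  Nat.card {σ : List ℕ // IsPermOf n σ ∧ IsPopStacked n σ ∧ (ascRuns σ).length = k}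

/-- Greedy sorting with a pop-stack whose contents increase from top to bottom:
push when possible, otherwise pop the whole stack. -/
def greedyPop : List ℕ → List ℕ → List ℕ
  | stack, [] => stack
  | [], a :: rest => greedyPop [a] rest
  | t :: s, a :: rest =>
    if a < t then greedyPop (a :: t :: s) rest
    else (t :: s) ++ greedyPop [a] rest

/-!
A permutation is pop-stacked iff any two adjacent ascending runs `R, S` satisfy
`min R < max S`: reversing every ascending run of such a permutation gives a preimage under the
pop-stack operator, and conversely the ascending runs of `popStack π` are unions of reversed
descending runs of `π`, which overlap in this way. Labelling each value by the index of its
ascending run turns the pop-stacked permutations of `[n]` with `k` runs into the words of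
length `n` over `Fin k` that use every letter and contain both `j (j+1)` and `(j+1) j` as
subsequences. Whether a word has this property depends only on the sets of letters and of
ordered pairs of letters it contains, and these are updated letter by letter; so the counts are
linear functionals of the powers of a transfer matrix, satisfy the recurrence given by its
characteristic polynomial, and have a rational generating function.
-/

namespace List

variable {α : Type*} {r : α → α → Bool}

theorem head?_eq_of_splitBy_eq_cons {m R : List α} {Rs : List (List α)}
    (h : m.splitBy r = R :: Rs) : m.head? = R.head? := by
  rw [← flatten_splitBy r m, h, flatten_cons,
    head?_append_of_ne_nil _ (ne_nil_of_mem_splitBy (h ▸ mem_cons_self))]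

theorem splitBy_append_of_rel {s m R : List α} {Rs : List (List α)} (hs : s ≠ [])
    (hsc : s.IsChain fun x y ↦ r x y) (hm : m.splitBy r = R :: Rs)
    (h : ∀ x ∈ s.getLast?, ∀ y ∈ m.head?, r x y) :
    (s ++ m).splitBy r = (s ++ R) :: Rs := by
  obtain ⟨rfl, hn, hc, hc'⟩ := splitBy_eq_iff.1 hm
  have hR : R ≠ [] := fun h ↦ hn (h ▸ mem_cons_self)
  rw [splitBy_eq_iff]
  refine ⟨by simp, by simp_all, ?_, ?_⟩
  · rintro l (_ | ⟨_, hl⟩)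
    · exact isChain_append.2 ⟨hsc, hc R mem_cons_self, by
        simpa [head?_append_of_ne_nil _ hR] using h⟩
    · exact hc l (mem_cons_of_mem _ hl)
  · rw [isChain_cons] at hc' ⊢
    refine ⟨fun S hS ↦ ?_, hc'.2⟩
    obtain ⟨_, hb, H⟩ := hc'.1 S hS
    exact ⟨append_ne_nil_of_right_ne_nil _ hR, hb, by rwa [getLast_append_right hR]⟩

theorem isChain_splitBy_of_nodup {l : List α} (hl : l.Nodup) :
    (l.splitBy r).IsChain fun R S ↦ ∃ x ∈ R, ∃ y ∈ S, x ≠ y ∧ r x y = false := by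
  have hdisj := (nodup_flatten.1 ((flatten_splitBy r l).symm ▸ hl)).2
  have hbd := isChain_iff_getElem.1 (isChain_getLast_head_splitBy r l)
  refine isChain_iff_getElem.2 fun i hi ↦ ?_
  obtain ⟨ha, hb, H⟩ := hbd i hi
  refine ⟨_, getLast_mem ha, _, head_mem hb, fun h ↦ ?_, H⟩
  exact pairwise_iff_getElem.1 hdisj i (i + 1) _ _ (by omega) (getLast_mem ha) (h ▸ head_mem hb)

theorem flatten_map_reverse_perm (L : List (List α)) : (L.map reverse).flatten ~ L.flatten :=
  calc (L.map reverse).flatten ~ (L.map reverse).flatten.reverse := (reverse_perm _).symm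
    _ = L.reverse.flatten := flatten_reverse.symm
    _ ~ L.flatten := (reverse_perm L).flatten

end List

open List

theorem ascRuns_eq_splitBy (l : List ℕ) : ascRuns l = l.splitBy (· < ·) := by
  induction l with
  | nil => rfl
  | cons a l ih =>
    rw [ascRuns, ih]
    rcases h : l.splitBy (· < ·) with _ | ⟨_ | ⟨b, g⟩, gs⟩
    · rw [splitBy_eq_nil.1 h]; rfl
    · exact absurd (h ▸ mem_cons_self) (nil_notMem_splitBy _ l)
    · have hb := head?_eq_of_splitBy_eq_cons h
      rw [h]
      dsimp only
      split_ifs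
      · exact (splitBy_append_of_rel (s := [a]) (by simp) (by simp) h (by simp_all)).symm
      · rw [show a :: l = [a] ++ l from rfl, splitBy_append (by simp_all), h]; rfl

theorem descRuns_eq_splitBy (l : List ℕ) : descRuns l = l.splitBy (· > ·) := by
  induction l with
  | nil => rfl
  | cons a l ih =>
    rw [descRuns, ih]
    rcases h : l.splitBy (· > ·) with _ | ⟨_ | ⟨b, g⟩, gs⟩
    · rw [splitBy_eq_nil.1 h]; rfl
    · exact absurd (h ▸ mem_cons_self) (nil_notMem_splitBy _ l)
    · have hb := head?_eq_of_splitBy_eq_cons h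
      rw [h]
      dsimp only
      split_ifs
      · exact (splitBy_append_of_rel (s := [a]) (by simp) (by simp) h (by simp_all)).symm
      · rw [show a :: l = [a] ++ l from rfl, splitBy_append (by simp_all), h]; rfl

-- For increasing lists this is the condition `min R < max S` of the paper.
def ExistsLt (R S : List ℕ) : Prop := ∃ x ∈ R, ∃ y ∈ S, x < y

theorem ExistsLt.mono {R R' S S' : List ℕ} (h : ExistsLt R S) (hR : R ⊆ R') (hS : S ⊆ S') :
    ExistsLt R' S' :=
  let ⟨x, hx, y, hy, hxy⟩ := h; ⟨x, hR hx, y, hS hy, hxy⟩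

theorem ExistsLt.head_lt_getLast {R S : List ℕ} (h : ExistsLt R S) (hR : R.IsChain (· < ·))
    (hS : S.IsChain (· < ·)) (hR₀ : R ≠ []) (hS₀ : S ≠ []) : R.head hR₀ < S.getLast hS₀ := by
  obtain ⟨x, hx, y, hy, hxy⟩ := h
  have := ((isChain_iff_pairwise.1 hR).imp le_of_lt).rel_head hx
  have := ((isChain_iff_pairwise.1 hS).imp le_of_lt).rel_getLast hy
  omega

theorem isChain_lt_of_mem_splitBy {l R : List ℕ} (h : R ∈ l.splitBy (· < ·)) :
    R.IsChain (· < ·) := by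
  simpa using isChain_of_mem_splitBy h

theorem isChain_gt_of_mem_splitBy {l R : List ℕ} (h : R ∈ l.splitBy (· > ·)) :
    R.IsChain (· > ·) := by
  simpa using isChain_of_mem_splitBy h

theorem isChain_existsLt_swap_splitBy_lt {l : List ℕ} (hl : l.Nodup) :
    (l.splitBy (· < ·)).IsChain fun R S ↦ ExistsLt S R :=
  (isChain_splitBy_of_nodup hl).imp fun _ _ ⟨x, hx, y, hy, hne, h⟩ ↦
    ⟨y, hy, x, hx, by simp at h; omega⟩

theorem isChain_existsLt_splitBy_gt {l : List ℕ} (hl : l.Nodup) :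
    (l.splitBy (· > ·)).IsChain ExistsLt :=
  (isChain_splitBy_of_nodup hl).imp fun _ _ ⟨x, hx, y, hy, hne, h⟩ ↦
    ⟨x, hx, y, hy, by simp at h; omega⟩

theorem isChain_existsLt_splitBy_flatten {ss : List (List ℕ)} (hn : [] ∉ ss)
    (hc : ∀ s ∈ ss, s.IsChain (· < ·)) (hov : ss.IsChain ExistsLt) :
    (ss.flatten.splitBy (· < ·)).IsChain ExistsLt := by
  -- Each ascending run is a union of consecutive segments; the induction also records that the
  -- first segment lies in the first run.
  suffices (ss.flatten.splitBy (· < ·)).IsChain ExistsLt ∧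
      ∀ s ∈ ss.head?, ∀ R ∈ (ss.flatten.splitBy (· < ·)).head?, s ⊆ R from this.1
  induction ss with
  | nil => simp
  | cons s ss ih =>
    obtain ⟨ihc, ihh⟩ := ih (fun h ↦ hn (mem_cons_of_mem _ h))
      (fun t ht ↦ hc t (mem_cons_of_mem _ ht)) hov.tail
    have hs : s ≠ [] := fun h ↦ hn (h ▸ mem_cons_self)
    have hsc : s.IsChain fun x y ↦ decide (x < y) := by simpa using hc s mem_cons_self
    rw [flatten_cons]
    rcases hm : ss.flatten.splitBy (· < ·) with _ | ⟨R, Rs⟩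
    · rw [splitBy_eq_nil.1 hm, append_nil, splitBy_of_isChain hs hsc]
      simp
    obtain ⟨y, hy⟩ : ∃ y, ss.flatten.head? = some y := by
      rw [head?_eq_of_splitBy_eq_cons hm]
      exact ⟨_, head?_eq_some_head (ne_nil_of_mem_splitBy (hm ▸ mem_cons_self))⟩
    rw [hm] at ihc
    by_cases hlt : s.getLast hs < y
    · rw [splitBy_append_of_rel hs hsc hm (by rw [getLast?_eq_some_getLast hs, hy]; simpa)]
      refine ⟨?_, by simp⟩
      rw [isChain_cons] at ihc ⊢
      exact ⟨fun S hS ↦ (ihc.1 S hS).mono (subset_append_right _ _) (Subset.refl S), ihc.2⟩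
    · rw [splitBy_append (by rw [getLast?_eq_some_getLast hs, hy]; simpa using hlt),
        splitBy_of_isChain hs hsc, hm]
      obtain ⟨t, ss', rfl⟩ : ∃ t ss', ss = t :: ss' := by
        cases ss with
        | nil => simp at hm
        | cons t ss' => exact ⟨t, ss', rfl⟩
      have htR : t ⊆ R := ihh t rfl R (by rw [hm]; rfl)
      exact ⟨isChain_cons_cons.2 ⟨(isChain_cons_cons.1 hov).1.mono (Subset.refl s) htR, ihc⟩,
        by simp⟩

theorem splitBy_gt_flatten_map_reverse {Rs : List (List ℕ)} (hn : [] ∉ Rs)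
    (hc : ∀ R ∈ Rs, R.IsChain (· < ·)) (hov : Rs.IsChain ExistsLt) :
    (Rs.map reverse).flatten.splitBy (· > ·) = Rs.map reverse := by
  refine splitBy_flatten (by simpa using hn) ?_ ?_
  · simp only [mem_map, forall_exists_index, and_imp, forall_apply_eq_imp_iff₂, isChain_reverse]
    exact fun R hR ↦ by simpa using hc R hR
  · rw [isChain_map]
    refine hov.imp_of_mem_imp fun R S hR hS h ↦ ?_
    have hR₀ : R ≠ [] := fun h ↦ hn (h ▸ hR)
    have hS₀ : S ≠ [] := fun h ↦ hn (h ▸ hS)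
    refine ⟨by simpa using hR₀, by simpa using hS₀, ?_⟩
    simpa using (h.head_lt_getLast (hc R hR) (hc S hS) hR₀ hS₀).le

theorem isPopStacked_iff {n : ℕ} {σ : List ℕ} (hσ : IsPermOf n σ) :
    IsPopStacked n σ ↔ (σ.splitBy (· < ·)).IsChain ExistsLt := by
  constructor
  · rintro ⟨π, hπ, rfl⟩
    rw [popStack, descRuns_eq_splitBy]
    refine isChain_existsLt_splitBy_flatten (by simp) ?_ ?_
    · simp only [mem_map, forall_exists_index, and_imp, forall_apply_eq_imp_iff₂, isChain_reverse]
      exact fun D hD ↦ isChain_gt_of_mem_splitBy hD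
    · rw [isChain_map]
      refine (isChain_existsLt_splitBy_gt (hπ.nodup_iff.2 nodup_range')).imp fun D E h ↦ ?_
      simpa [ExistsLt] using h
  · intro h
    refine ⟨((σ.splitBy (· < ·)).map reverse).flatten, ?_, ?_⟩
    · exact (flatten_map_reverse_perm _).trans ((flatten_splitBy _ σ).symm ▸ hσ)
    · rw [popStack, descRuns_eq_splitBy, splitBy_gt_flatten_map_reverse (nil_notMem_splitBy _ σ)
        (fun R hR ↦ isChain_lt_of_mem_splitBy hR) h, map_map]
      simp

section Words

variable {n k : ℕ}

def block (w : Fin n → Fin k) (j : Fin k) : List ℕ :=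
  ((finRange n).filter (w · = j)).map (·.val + 1)

def wordToPerm (w : Fin n → Fin k) : List ℕ := (ofFn (block w)).flatten

def Occurs (w : Fin n → Fin k) (a b : Fin k) : Prop := ∃ p q, p < q ∧ w p = a ∧ w q = b

def IsPopWord (w : Fin n → Fin k) : Prop :=
  Function.Surjective w ∧ ∀ a b : Fin k, a.val + 1 = b.val → Occurs w a b ∧ Occurs w b a

theorem mem_block {w : Fin n → Fin k} {j : Fin k} {v : ℕ} :
    v ∈ block w j ↔ ∃ i, w i = j ∧ i.val + 1 = v := by
  simp only [block, mem_map, mem_filter, mem_finRange, true_and, decide_eq_true_eq]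

theorem isChain_lt_block (w : Fin n → Fin k) (j : Fin k) : (block w j).IsChain (· < ·) :=
  isChain_iff_pairwise.2 <|
    ((pairwise_lt_finRange n).filter _).map _ fun _ _ h ↦ Nat.succ_lt_succ h

theorem existsLt_block_iff {w : Fin n → Fin k} {a b : Fin k} :
    ExistsLt (block w a) (block w b) ↔ Occurs w a b := by
  simp only [ExistsLt, mem_block, Occurs]
  constructor
  · rintro ⟨_, ⟨p, hp, rfl⟩, _, ⟨q, hq, rfl⟩, hpq⟩
    exact ⟨p, q, Nat.lt_of_succ_lt_succ hpq, hp, hq⟩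
  · rintro ⟨p, q, hpq, hp, hq⟩
    exact ⟨_, ⟨p, hp, rfl⟩, _, ⟨q, hq, rfl⟩, Nat.succ_lt_succ hpq⟩

theorem surjective_iff_block_ne_nil {w : Fin n → Fin k} :
    Function.Surjective w ↔ ∀ j, block w j ≠ [] := by
  constructor
  · intro h j
    obtain ⟨i, rfl⟩ := h j
    exact ne_nil_of_mem (mem_block.2 ⟨i, rfl, rfl⟩)
  · intro h j
    obtain ⟨v, hv⟩ := exists_mem_of_ne_nil _ (h j)
    obtain ⟨i, hi, -⟩ := mem_block.1 hv
    exact ⟨i, hi⟩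

theorem isPopWord_iff (w : Fin n → Fin k) :
    IsPopWord w ↔ (∀ j, block w j ≠ []) ∧ (ofFn (block w)).IsChain ExistsLt ∧
      (ofFn (block w)).IsChain fun R S ↦ ExistsLt S R := by
  rw [IsPopWord, surjective_iff_block_ne_nil]
  refine and_congr_right fun _ ↦ ?_
  simp only [isChain_ofFn, existsLt_block_iff, ← forall_and]
  refine ⟨fun h i hi ↦ h _ _ rfl, fun h ⟨a, ha⟩ ⟨b, hb⟩ hab ↦ ?_⟩
  obtain rfl : b = a + 1 := hab.symm
  exact h a hb

theorem isPermOf_wordToPerm (w : Fin n → Fin k) : IsPermOf n (wordToPerm w) := by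
  have hnd : (wordToPerm w).Nodup := by
    refine nodup_flatten.2 ⟨?_, pairwise_ofFn.2 fun a b hab v hva hvb ↦ ?_⟩
    · simp only [mem_ofFn, forall_exists_index, forall_apply_eq_imp_iff]
      exact fun j ↦ (isChain_iff_pairwise.1 (isChain_lt_block w j)).imp ne_of_lt
    · obtain ⟨i, rfl, rfl⟩ := mem_block.1 hva
      obtain ⟨i', hi', he⟩ := mem_block.1 hvb
      obtain rfl : i' = i := Fin.ext (by omega)
      exact hab.ne hi'
  refine (perm_ext_iff_of_nodup hnd nodup_range').2 fun v ↦ ?_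
  simp only [wordToPerm, mem_flatten, mem_ofFn, mem_range'_1]
  constructor
  · rintro ⟨_, ⟨j, rfl⟩, hv⟩
    obtain ⟨i, -, rfl⟩ := mem_block.1 hv
    omega
  · rintro ⟨h1, h2⟩
    exact ⟨_, ⟨w ⟨v - 1, by omega⟩, rfl⟩, mem_block.2 ⟨_, rfl, by simp; omega⟩⟩

theorem splitBy_wordToPerm {w : Fin n → Fin k} (hne : ∀ j, block w j ≠ [])
    (hbd : (ofFn (block w)).IsChain fun R S ↦ ExistsLt S R) :
    (wordToPerm w).splitBy (· < ·) = ofFn (block w) := by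
  refine splitBy_flatten (by simpa [mem_ofFn] using hne) ?_ ?_
  · simp only [mem_ofFn, forall_exists_index, forall_apply_eq_imp_iff]
    exact fun j ↦ by simpa using isChain_lt_block w j
  · refine hbd.imp_of_mem_imp fun R S hR hS h ↦ ?_
    obtain ⟨j, rfl⟩ := mem_ofFn.1 hR
    obtain ⟨j', rfl⟩ := mem_ofFn.1 hS
    refine ⟨hne j, hne j', ?_⟩
    simpa using (h.head_lt_getLast (isChain_lt_block w j') (isChain_lt_block w j) _ _).le

theorem wordToPerm_mem {w : Fin n → Fin k} (hw : IsPopWord w) :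
    IsPermOf n (wordToPerm w) ∧ IsPopStacked n (wordToPerm w) ∧
      (ascRuns (wordToPerm w)).length = k := by
  obtain ⟨hne, hov, hbd⟩ := (isPopWord_iff w).1 hw
  have hruns := splitBy_wordToPerm hne hbd
  refine ⟨isPermOf_wordToPerm w, ?_, ?_⟩
  · rwa [isPopStacked_iff (isPermOf_wordToPerm w), hruns]
  · rw [ascRuns_eq_splitBy, hruns, length_ofFn]

theorem wordToPerm_injOn :
    Set.InjOn (wordToPerm (n := n) (k := k)) {w | IsPopWord w} := by
  intro w hw w' hw' h
  obtain ⟨hne, -, hbd⟩ := (isPopWord_iff w).1 hw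
  obtain ⟨hne', -, hbd'⟩ := (isPopWord_iff w').1 hw'
  have hb : block w = block w' := ofFn_injective <| by
    rw [← splitBy_wordToPerm hne hbd, ← splitBy_wordToPerm hne' hbd', h]
  funext i
  obtain ⟨i', hi', he⟩ := mem_block.1 (hb ▸ mem_block.2 ⟨i, rfl, rfl⟩ : i.val + 1 ∈ block w' (w i))
  rw [← hi', Fin.ext (by omega : i'.val = i.val)]

theorem exists_block_eq {G : Fin k → List ℕ} (hG : ∀ j, (G j).IsChain (· < ·))
    (hperm : (ofFn G).flatten ~ range' 1 n) : ∃ w : Fin n → Fin k, block w = G := by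
  have hdisj : ∀ j j', j ≠ j' → ∀ v ∈ G j, v ∉ G j' := by
    have := (nodup_flatten.1 (hperm.nodup_iff.2 nodup_range')).2
    intro j j' hjj' v hv hv'
    rcases lt_or_gt_of_ne hjj' with h | h
    · exact pairwise_ofFn.1 this h hv hv'
    · exact pairwise_ofFn.1 this h hv' hv
  have hmem : ∀ v, (∃ j, v ∈ G j) ↔ 1 ≤ v ∧ v < 1 + n := fun v ↦ by
    rw [← mem_range'_1, ← hperm.mem_iff]
    simp [mem_flatten, mem_ofFn]
  choose w hw using fun i : Fin n ↦ (hmem (i.val + 1)).2 ⟨by omega, by omega⟩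
  refine ⟨w, funext fun j ↦ Perm.eq_of_pairwise' (r := (· < ·))
    (isChain_iff_pairwise.1 (isChain_lt_block w j)) (isChain_iff_pairwise.1 (hG j)) ?_⟩
  refine (perm_ext_iff_of_nodup ?_ ?_).2 fun v ↦ ⟨fun hv ↦ ?_, fun hv ↦ ?_⟩
  · exact (isChain_iff_pairwise.1 (isChain_lt_block w j)).imp ne_of_lt
  · exact (isChain_iff_pairwise.1 (hG j)).imp ne_of_lt
  · obtain ⟨i, rfl, rfl⟩ := mem_block.1 hv
    exact hw i
  · obtain ⟨h1, h2⟩ := (hmem v).1 ⟨j, hv⟩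
    refine mem_block.2 ⟨⟨v - 1, by omega⟩, ?_, by simp; omega⟩
    by_contra hne
    exact hdisj _ _ hne v (by simpa [Nat.sub_add_cancel h1] using hw ⟨v - 1, by omega⟩) hv

theorem exists_wordToPerm_eq {σ : List ℕ} (hσ : IsPermOf n σ) (hpop : IsPopStacked n σ)
    (hk : (ascRuns σ).length = k) : ∃ w : Fin n → Fin k, IsPopWord w ∧ wordToPerm w = σ := by
  rw [ascRuns_eq_splitBy] at hk
  subst hk
  set Rs := σ.splitBy (· < ·)
  obtain ⟨w, hw⟩ := exists_block_eq (n := n) (G := fun j : Fin Rs.length ↦ Rs[j.val])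
    (fun j ↦ isChain_lt_of_mem_splitBy (getElem_mem j.isLt))
    (by rwa [ofFn_getElem, flatten_splitBy])
  have hruns : ofFn (block w) = σ.splitBy (· < ·) := by rw [hw, ofFn_getElem]
  refine ⟨w, (isPopWord_iff w).2 ⟨fun j ↦ ?_, ?_, ?_⟩, by rw [wordToPerm, hruns, flatten_splitBy]⟩
  · exact hw ▸ ne_nil_of_mem_splitBy (getElem_mem j.isLt)
  · rwa [hruns, ← isPopStacked_iff hσ]
  · rw [hruns]
    exact isChain_existsLt_swap_splitBy_lt (hσ.nodup_iff.2 nodup_range')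

end Words

theorem popCountK_eq_card (n k : ℕ) :
    popCountK n k = Nat.card {w : Fin n → Fin k // IsPopWord w} := by
  refine (Nat.card_eq_of_bijective (fun w ↦ ⟨wordToPerm w.1, wordToPerm_mem w.2⟩)
    ⟨fun w w' h ↦ Subtype.ext (wordToPerm_injOn w.2 w'.2 (congrArg Subtype.val h)), ?_⟩).symm
  rintro ⟨σ, hσ, hpop, hk⟩
  obtain ⟨w, hw, rfl⟩ := exists_wordToPerm_eq hσ hpop hk
  exact ⟨⟨w, hw⟩, rfl⟩

open Polynomial Finset

section RationalGF

variable {R : Type*} [CommRing R]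

def HasRationalGF (u : ℕ → R) : Prop :=
  ∃ p q : R[X], q ≠ 0 ∧ (q : PowerSeries R) * PowerSeries.mk u = p

theorem hasRationalGF_of_recurrence [Nontrivial R] {u : ℕ → R} {χ : R[X]} (hχ : χ.Monic)
    (hu : ∀ m, ∑ i ∈ range (χ.natDegree + 1), χ.coeff i * u (m + i) = 0) :
    HasRationalGF u := by
  set N := χ.natDegree
  set q : R[X] := ∑ i ∈ range (N + 1), C (χ.coeff i) * X ^ (N - i)
  have hq : q.coeff 0 = 1 := by
    rw [finsetSum_coeff, Finset.sum_range_succ, Finset.sum_eq_zero fun i hi ↦ ?_, zero_add,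
      Nat.sub_self, pow_zero, mul_one, coeff_C_zero, hχ.coeff_natDegree]
    rw [coeff_C_mul_X_pow, if_neg (by simp at hi; omega)]
  have hvanish : ∀ m, N ≤ m → PowerSeries.coeff m ((q : PowerSeries R) * .mk u) = 0 := by
    intro m hm
    rw [← hu (m - N), ← Polynomial.coeToPowerSeries.ringHom_apply, map_sum, sum_mul, map_sum]
    simp only [map_mul, map_pow, Polynomial.coeToPowerSeries.ringHom_apply, Polynomial.coe_C,
      Polynomial.coe_X]
    refine sum_congr rfl fun i hi ↦ ?_
    rw [mul_assoc, PowerSeries.coeff_C_mul, mul_comm (PowerSeries.X ^ _),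
      PowerSeries.coeff_mul_X_pow', if_pos (by omega), PowerSeries.coeff_mk]
    congr 2
    simp at hi
    omega
  refine ⟨PowerSeries.trunc N ((q : PowerSeries R) * .mk u), q,
    fun h ↦ by simp [h] at hq, PowerSeries.ext fun m ↦ ?_⟩
  rw [Polynomial.coeff_coe, PowerSeries.coeff_trunc]
  split_ifs with hm
  · rfl
  · exact hvanish m (by omega)

theorem hasRationalGF_of_aeval_eq_zero [Nontrivial R] {A : Type*} [Ring A] [Algebra R A]
    (x : A) {χ : R[X]} (hχ : χ.Monic) (hx : aeval x χ = 0) (L : A →ₗ[R] R) :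
    HasRationalGF fun n ↦ L (x ^ n) := by
  refine hasRationalGF_of_recurrence hχ fun m ↦ ?_
  calc ∑ i ∈ range (χ.natDegree + 1), χ.coeff i * L (x ^ (m + i))
      = L (x ^ m * aeval x χ) := by
        simp only [aeval_eq_sum_range, mul_sum, map_sum, mul_smul_comm, ← pow_add, map_smul,
          smul_eq_mul]
    _ = 0 := by rw [hx, mul_zero, map_zero]

end RationalGF

section TransferMatrix

variable {A S : Type*} [Fintype A] [Fintype S] [DecidableEq S]

def transferMatrix (R : Type*) [Semiring R] (step : A → S → S) : Matrix S S R :=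
  Matrix.of fun s s' ↦ (#{c | step c s' = s} : R)

variable (f : (n : ℕ) → (Fin n → A) → S) (step : A → S → S)

theorem card_fiber_eq_transferMatrix_pow (R : Type*) [Semiring R]
    (hf : ∀ n c w, f (n + 1) (Fin.cons c w) = step c (f n w)) (n : ℕ) (s : S) :
    (#{w | f n w = s} : R) = (transferMatrix R step ^ n) s (f 0 Fin.elim0) := by
  induction n generalizing s with
  | zero =>
    rw [pow_zero, Matrix.one_apply]
    by_cases h : s = f 0 Fin.elim0
    · rw [if_pos h, filter_true_of_mem fun w _ ↦ by rw [h, Subsingleton.elim w Fin.elim0]]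
      simp
    · rw [if_neg h,
        filter_false_of_mem fun w _ hw ↦ h (by rw [← hw, Subsingleton.elim w Fin.elim0])]
      simp
  | succ n ih =>
    have hsplit : ∀ c, (#{v | step c (f n v) = s} : R) =
        ∑ s', if step c s' = s then (#{v | f n v = s'} : R) else 0 := fun c ↦ by
      rw [← sum_filter, ← Nat.cast_sum, sum_card_fiberwise_eq_card_filter]
      simp
    calc (#{w | f (n + 1) w = s} : R) = ∑ c, (#{v | step c (f n v) = s} : R) := by
          simp only [natCast_card_filter]
          rw [← (Fin.consEquiv fun _ ↦ A).sum_comp, Fintype.sum_prod_type]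
          simp only [← hf]
          rfl
      _ = ∑ s', transferMatrix R step s s' * (transferMatrix R step ^ n) s' (f 0 Fin.elim0) := by
          simp_rw [hsplit, ← ih]
          rw [sum_comm]
          refine sum_congr rfl fun s' _ ↦ ?_
          rw [← sum_filter, sum_const, nsmul_eq_mul, transferMatrix, Matrix.of_apply]
      _ = _ := by rw [pow_succ', Matrix.mul_apply]

theorem hasRationalGF_card_filter (R : Type*) [CommRing R] [Nontrivial R]
    (hf : ∀ n c w, f (n + 1) (Fin.cons c w) = step c (f n w)) (P : S → Prop) [DecidablePred P] :
    HasRationalGF fun n ↦ (#{w | P (f n w)} : R) := by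
  let L : Matrix S S R →ₗ[R] R := ∑ s with P s, Matrix.entryLinearMap R R s (f 0 Fin.elim0)
  have hL : (fun n ↦ (#{w | P (f n w)} : R)) = fun n ↦ L (transferMatrix R step ^ n) := by
    funext n
    have : #{w | P (f n w)} = #{w | f n w ∈ ({s | P s} : Finset S)} := by simp
    rw [this, ← sum_card_fiberwise_eq_card_filter]
    simp [L, card_fiber_eq_transferMatrix_pow f step R hf]
  rw [hL]
  exact hasRationalGF_of_aeval_eq_zero (transferMatrix R step) (Matrix.charpoly_monic _)
    (Matrix.aeval_self_charpoly _) L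

end TransferMatrix

section PopAutomaton

variable {n k : ℕ}

abbrev PopState (k : ℕ) := Finset (Fin k) × Finset (Fin k × Fin k)

open Classical in
noncomputable def popState (w : Fin n → Fin k) : PopState k :=
  (univ.image w, ({ab | Occurs w ab.1 ab.2} : Finset (Fin k × Fin k)))

-- Words are read from the right: prepending `c` creates the pairs `(c, b)` for the letters `b`
-- already seen.
def popStep (c : Fin k) (s : PopState k) : PopState k :=
  (insert c s.1, s.2 ∪ s.1.image (c, ·))

def PopAccepting (s : PopState k) : Prop :=
  s.1 = univ ∧ ∀ a b : Fin k, a.val + 1 = b.val → (a, b) ∈ s.2 ∧ (b, a) ∈ s.2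

theorem mem_popState_snd {w : Fin n → Fin k} {a b : Fin k} :
    (a, b) ∈ (popState w).2 ↔ Occurs w a b := by
  simp [popState]

theorem occurs_cons_iff {c a b : Fin k} {w : Fin n → Fin k} :
    Occurs (Fin.cons c w) a b ↔ Occurs w a b ∨ (c = a ∧ ∃ i, w i = b) := by
  constructor
  · rintro ⟨p, q, hpq, hp, hq⟩
    cases q using Fin.cases with
    | zero => exact absurd hpq (Fin.not_lt_zero p)
    | succ q =>
      cases p using Fin.cases with
      | zero => exact Or.inr ⟨hp, q, hq⟩
      | succ p => exact Or.inl ⟨p, q, Fin.succ_lt_succ_iff.1 hpq, hp, hq⟩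
  · rintro (⟨p, q, hpq, hp, hq⟩ | ⟨rfl, q, hq⟩)
    · exact ⟨p.succ, q.succ, Fin.succ_lt_succ_iff.2 hpq, hp, hq⟩
    · exact ⟨0, q.succ, Fin.succ_pos q, rfl, hq⟩

theorem popState_cons (c : Fin k) (w : Fin n → Fin k) :
    popState (Fin.cons c w) = popStep c (popState w) := by
  ext ⟨a, b⟩
  · simp [popState, popStep, Fin.exists_fin_succ, eq_comm]
  · simp only [popStep, mem_union, mem_image, Prod.mk.injEq, mem_popState_snd, occurs_cons_iff]
    simp [popState, eq_comm, and_comm]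

theorem isPopWord_iff_popAccepting (w : Fin n → Fin k) :
    IsPopWord w ↔ PopAccepting (popState w) := by
  simp [IsPopWord, PopAccepting, Function.Surjective, popState, Finset.eq_univ_iff_forall]

end PopAutomaton

theorem statement16_general (k : ℕ) :
    ∃ p q : Polynomial ℚ, q ≠ 0 ∧
      (q : PowerSeries ℚ) * PowerSeries.mk (fun n => (popCountK n k : ℚ)) =
        (p : PowerSeries ℚ) := by
  classical
  have hcount : (fun n ↦ (popCountK n k : ℚ)) =
      fun n ↦ (#{w : Fin n → Fin k | PopAccepting (popState w)} : ℚ) := by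
    funext n
    rw [popCountK_eq_card, Nat.card_eq_fintype_card, Fintype.card_subtype]
    simp only [isPopWord_iff_popAccepting]
  rw [hcount]
  exact hasRationalGF_card_filter (fun _ ↦ popState) popStep ℚ (fun _ ↦ popState_cons)
    PopAccepting

/-- for each fixed `k ≥ 1`, the generating function `F_k(x)` for
pop-stacked permutations with exactly `k` ascending runs is rational. -/
theorem statement16 (k : ℕ) (hk : 1 ≤ k) :
    ∃ p q : Polynomial ℚ, q ≠ 0 ∧
      (q : PowerSeries ℚ) * PowerSeries.mk (fun n => (popCountK n k : ℚ)) =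
        (p : PowerSeries ℚ) :=
  statement16_general k
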